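/- Let D be a real M×M skew-symmetric matrix, Y⁰ ∈ ℝ^M, and r a positive integer with r ≡ 0 (mod 4). Define Y_r(t) = ∑_{j=0}^r (1/j!) Dʲ Y⁰ tʲ. If τ‖D‖ ≤ √6, then ‖Y_r(t)‖ ≤ ‖Y⁰‖ for all t ∈ [0, τ]. -/

import Mathlib

open Matrix

/-- The degree-`r` truncation of the exponential series `e^{tD} Y⁰`. -/
noncomputable def truncExp {M : ℕ} (D : Matrix (Fin M) (Fin M) ℝ)
    (Y0 : EuclideanSpace ℝ (Fin M)) (r : ℕ) (t : ℝ) : EuclideanSpace ℝ (Fin M) :=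
  ∑ j ∈ Finset.range (r + 1), WithLp.toLp 2 ((t ^ j / (j.factorial : ℝ)) • (D ^ j).mulVec Y0)

open Finset
noncomputable def mvE {M : ℕ} (D : Matrix (Fin M) (Fin M) ℝ) (x : EuclideanSpace ℝ (Fin M)) :
    EuclideanSpace ℝ (Fin M) := WithLp.toLp 2 (D.mulVec x)

noncomputable def uu {M : ℕ} (D : Matrix (Fin M) (Fin M) ℝ) (Y0 : EuclideanSpace ℝ (Fin M))
    (k : ℕ) : EuclideanSpace ℝ (Fin M) := WithLp.toLp 2 ((D ^ k).mulVec Y0)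

section
variable {M : ℕ} (D : Matrix (Fin M) (Fin M) ℝ) (Y0 : EuclideanSpace ℝ (Fin M))

lemma clm_eq_mvE (x : EuclideanSpace ℝ (Fin M)) :
    Matrix.toEuclideanCLM (𝕜 := ℝ) D x = mvE D x := rfl

lemma uu_zero : uu D Y0 0 = Y0 := by
  simp [uu, pow_zero, Matrix.one_mulVec]

lemma uu_succ (k : ℕ) : uu D Y0 (k + 1) = mvE D (uu D Y0 k) := by
  simp [uu, mvE, pow_succ', Matrix.mulVec_mulVec]

lemma mvE_norm_le (x : EuclideanSpace ℝ (Fin M)) :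
    ‖mvE D x‖ ≤ ‖Matrix.toEuclideanCLM (𝕜 := ℝ) D‖ * ‖x‖ := by
  rw [← clm_eq_mvE]; exact (Matrix.toEuclideanCLM (𝕜 := ℝ) D).le_opNorm x

variable (hD : D + D.transpose = 0)
include hD

lemma skew_inner (x y : EuclideanSpace ℝ (Fin M)) :
    inner (𝕜 := ℝ) (mvE D x) y = - inner (𝕜 := ℝ) x (mvE D y) := by
  have hDT : ∀ i j, D j i = - D i j := by
    intro i j
    have := congrFun (congrFun hD j) i
    simp only [Matrix.add_apply, Matrix.transpose_apply, Matrix.zero_apply] at this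
    linarith
  simp only [PiLp.inner_apply, RCLike.inner_apply, conj_trivial, mvE, Matrix.mulVec,
    dotProduct, Finset.sum_mul, Finset.mul_sum, ← Finset.sum_neg_distrib]
  rw [Finset.sum_comm]
  refine Finset.sum_congr rfl fun i _ => Finset.sum_congr rfl fun j _ => ?_
  rw [hDT i j]; ring

lemma skew_self (x : EuclideanSpace ℝ (Fin M)) : inner (𝕜 := ℝ) (mvE D x) x = 0 := by
  have h := skew_inner D hD x x
  have h2 : inner (𝕜 := ℝ) x (mvE D x) = inner (𝕜 := ℝ) (mvE D x) x := real_inner_comm _ _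
  linarith

lemma inner_uu_succ (a b : ℕ) :
    inner (𝕜 := ℝ) (uu D Y0 (a + 1)) (uu D Y0 b)
      = - inner (𝕜 := ℝ) (uu D Y0 a) (uu D Y0 (b + 1)) := by
  rw [uu_succ, uu_succ]; exact skew_inner D hD _ _

lemma inner_uu_shift (k a b : ℕ) :
    inner (𝕜 := ℝ) (uu D Y0 (a + k)) (uu D Y0 b)
      = (-1 : ℝ) ^ k * inner (𝕜 := ℝ) (uu D Y0 a) (uu D Y0 (b + k)) := by
  induction k generalizing a b with
  | zero => simp
  | succ k ih =>
    have h1 : a + (k + 1) = (a + 1) + k := by omega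
    rw [h1, ih (a + 1) b, inner_uu_succ D Y0 hD a (b + k)]
    have h2 : b + k + 1 = b + (k + 1) := by omega
    rw [h2]; ring

lemma inner_uu_adj (a : ℕ) : inner (𝕜 := ℝ) (uu D Y0 (a + 1)) (uu D Y0 a) = 0 := by
  have h := inner_uu_succ D Y0 hD a a
  have h2 : inner (𝕜 := ℝ) (uu D Y0 a) (uu D Y0 (a + 1))
      = inner (𝕜 := ℝ) (uu D Y0 (a + 1)) (uu D Y0 a) := real_inner_comm _ _
  linarith

lemma inner_even (m i : ℕ) (hi : i ≤ 2 * m) :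
    inner (𝕜 := ℝ) (uu D Y0 (4 * m + 1)) (uu D Y0 (2 * i)) = 0 := by
  have h4 : 4 * m + 1 = (2 * m + i + 1) + (2 * m - i) := by omega
  rw [h4, inner_uu_shift D Y0 hD]
  have h5 : 2 * i + (2 * m - i) = 2 * m + i := by omega
  rw [h5, inner_uu_adj D Y0 hD]
  ring

lemma inner_odd (m i : ℕ) (hi : i ≤ 2 * m) :
    inner (𝕜 := ℝ) (uu D Y0 (4 * m + 1)) (uu D Y0 (2 * i + 1))
      = (-1 : ℝ) ^ i * ‖uu D Y0 (2 * m + i + 1)‖ ^ 2 := by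
  have h4 : 4 * m + 1 = (2 * m + i + 1) + (2 * m - i) := by omega
  rw [h4, inner_uu_shift D Y0 hD]
  have h5 : 2 * i + 1 + (2 * m - i) = 2 * m + i + 1 := by omega
  rw [h5, real_inner_self_eq_norm_sq]
  have hsign : ((-1 : ℝ)) ^ (2 * m - i) = (-1 : ℝ) ^ i := by
    have h6 : (2 * m - i) + i = 2 * m := by omega
    have h7 : ((-1 : ℝ)) ^ ((2 * m - i) + i) = 1 := by
      rw [h6, pow_mul]; norm_num
    rw [pow_add] at h7
    have h8 : ((-1 : ℝ)) ^ i * (-1 : ℝ) ^ i = 1 := by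
      rw [← pow_add, ← two_mul, pow_mul]; norm_num
    calc ((-1 : ℝ)) ^ (2 * m - i) = (-1 : ℝ) ^ (2 * m - i) * ((-1 : ℝ) ^ i * (-1 : ℝ) ^ i) := by
          rw [h8, mul_one]
      _ = ((-1 : ℝ) ^ (2 * m - i) * (-1 : ℝ) ^ i) * (-1 : ℝ) ^ i := by ring
      _ = (-1 : ℝ) ^ i := by rw [h7, one_mul]
  rw [hsign]
end

lemma sum_range_pair (n : ℕ) (a : ℕ → ℝ) :
    ∑ j ∈ Finset.range (2 * n), a j = ∑ i ∈ Finset.range n, (a (2 * i) + a (2 * i + 1)) := by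
  induction n with
  | zero => simp
  | succ n ih =>
    rw [show 2 * (n + 1) = (2 * n + 1) + 1 by ring, Finset.sum_range_succ, Finset.sum_range_succ,
      ih, Finset.sum_range_succ]
    ring

section
variable {M : ℕ} (D : Matrix (Fin M) (Fin M) ℝ) (Y0 : EuclideanSpace ℝ (Fin M))

noncomputable def ZZ (r : ℕ) (t : ℝ) : EuclideanSpace ℝ (Fin M) :=
  ∑ j ∈ Finset.range r, (t ^ j / (j.factorial : ℝ)) • uu D Y0 j

lemma truncExp_eq (r : ℕ) (t : ℝ) : truncExp D Y0 r t = ZZ D Y0 (r + 1) t := rfl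

lemma truncExp_split (r : ℕ) (t : ℝ) :
    truncExp D Y0 r t = ZZ D Y0 r t + (t ^ r / (r.factorial : ℝ)) • uu D Y0 r := by
  rw [truncExp_eq]; exact Finset.sum_range_succ _ _

lemma truncExp_zero (r : ℕ) : truncExp D Y0 r 0 = Y0 := by
  rw [truncExp_eq, ZZ]
  rw [Finset.sum_eq_single_of_mem 0 (Finset.mem_range.mpr (Nat.succ_pos r))]
  · simp [uu_zero]
  · intro j _ hj
    rw [zero_pow hj, zero_div, zero_smul]

lemma mvE_ZZ (r : ℕ) (t : ℝ) :
    mvE D (ZZ D Y0 r t) = ∑ j ∈ Finset.range r, (t ^ j / (j.factorial : ℝ)) • uu D Y0 (j + 1) := by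
  rw [← clm_eq_mvE, ZZ, map_sum]
  refine Finset.sum_congr rfl fun j _ => ?_
  rw [_root_.map_smul, clm_eq_mvE, ← uu_succ]

lemma hasDerivAt_truncExp (r : ℕ) (t : ℝ) :
    HasDerivAt (fun s => truncExp D Y0 r s) (mvE D (ZZ D Y0 r t)) t := by
  have hfun : (fun s => truncExp D Y0 r s)
      = fun s => (∑ j ∈ Finset.range r, (s ^ (j + 1) / ((j + 1).factorial : ℝ)) • uu D Y0 (j + 1))
          + uu D Y0 0 := by
    funext s
    rw [truncExp_eq, ZZ, Finset.sum_range_succ']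
    simp
  rw [hfun, mvE_ZZ]
  have h2 : HasDerivAt
      (fun s : ℝ => ∑ j ∈ Finset.range r, (s ^ (j + 1) / ((j + 1).factorial : ℝ)) • uu D Y0 (j + 1))
      (∑ j ∈ Finset.range r, (t ^ j / (j.factorial : ℝ)) • uu D Y0 (j + 1)) t := by
    apply HasDerivAt.fun_sum
    intro j _
    have h3 := ((hasDerivAt_pow (j + 1) t).div_const ((j + 1).factorial : ℝ)).smul_const
      (uu D Y0 (j + 1))
    convert h3 using 2
    have hfj : (j.factorial : ℝ) ≠ 0 := Nat.cast_ne_zero.mpr j.factorial_ne_zero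
    have hj1 : ((j : ℝ) + 1) ≠ 0 := by positivity
    rw [Nat.factorial_succ]
    push_cast
    field_simp
  simpa using h2.add_const (uu D Y0 0)
end

section
variable {M : ℕ} (D : Matrix (Fin M) (Fin M) ℝ) (Y0 : EuclideanSpace ℝ (Fin M))
variable (hD : D + D.transpose = 0)

noncomputable def SS (m : ℕ) (t : ℝ) : ℝ :=
  ∑ i ∈ Finset.range (2 * m),
    (t ^ (2 * i + 1) / ((2 * i + 1).factorial : ℝ)) * ((-1 : ℝ) ^ i * ‖uu D Y0 (2 * m + i + 1)‖ ^ 2)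

include hD in
lemma inner_ZZ_uu (m : ℕ) (t : ℝ) :
    inner (𝕜 := ℝ) (ZZ D Y0 (4 * m) t) (uu D Y0 (4 * m + 1)) = SS D Y0 m t := by
  rw [ZZ, sum_inner]
  have hsum : ∀ j ∈ Finset.range (4 * m),
      inner (𝕜 := ℝ) ((t ^ j / (j.factorial : ℝ)) • uu D Y0 j) (uu D Y0 (4 * m + 1))
        = (t ^ j / (j.factorial : ℝ)) * inner (𝕜 := ℝ) (uu D Y0 (4 * m + 1)) (uu D Y0 j) := by
    intro j _
    rw [real_inner_smul_left, real_inner_comm]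
  rw [Finset.sum_congr rfl hsum]
  have hpair := sum_range_pair (2 * m)
      (fun j => t ^ j / (j.factorial : ℝ) * inner (𝕜 := ℝ) (uu D Y0 (4 * m + 1)) (uu D Y0 j))
  rw [show 2 * (2 * m) = 4 * m by ring] at hpair
  rw [hpair, SS]
  refine Finset.sum_congr rfl fun i hi => ?_
  have hi' : i < 2 * m := Finset.mem_range.mp hi
  rw [inner_even D Y0 hD m i (le_of_lt hi'), inner_odd D Y0 hD m i (le_of_lt hi')]
  ring

include hD in
lemma hasDerivAt_inner_truncExp (m : ℕ) (t : ℝ) :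
    HasDerivAt (fun s => inner (𝕜 := ℝ) (truncExp D Y0 (4 * m) s) (truncExp D Y0 (4 * m) s))
      (-2 * (t ^ (4 * m) / ((4 * m).factorial : ℝ)) * SS D Y0 m t) t := by
  have hY := hasDerivAt_truncExp D Y0 (4 * m) t
  have hf := HasDerivAt.inner ℝ hY hY
  refine hf.congr_deriv ?_
  have hWY : inner (𝕜 := ℝ) (mvE D (ZZ D Y0 (4 * m) t)) (truncExp D Y0 (4 * m) t)
      = -(t ^ (4 * m) / ((4 * m).factorial : ℝ)) * SS D Y0 m t := by
    rw [truncExp_split, inner_add_right, real_inner_smul_right, skew_self D hD,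
      skew_inner D hD, ← uu_succ, inner_ZZ_uu D Y0 hD]
    ring
  have hYW : inner (𝕜 := ℝ) (truncExp D Y0 (4 * m) t) (mvE D (ZZ D Y0 (4 * m) t))
      = -(t ^ (4 * m) / ((4 * m).factorial : ℝ)) * SS D Y0 m t := by
    rw [real_inner_comm]; exact hWY
  rw [hYW, hWY]
  ring

lemma SS_nonneg (m : ℕ) (t : ℝ) (ht : 0 ≤ t)
    (hL : t * ‖Matrix.toEuclideanCLM (𝕜 := ℝ) D‖ ≤ Real.sqrt 6) :
    0 ≤ SS D Y0 m t := by
  set L := ‖Matrix.toEuclideanCLM (𝕜 := ℝ) D‖ with hLdef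
  have hL0 : 0 ≤ L := norm_nonneg _
  have htL2 : t ^ 2 * L ^ 2 ≤ 6 := by
    have h1 : (t * L) ^ 2 ≤ Real.sqrt 6 ^ 2 :=
      pow_le_pow_left₀ (mul_nonneg ht hL0) hL 2
    rw [Real.sq_sqrt (by norm_num : (6:ℝ) ≥ 0)] at h1
    nlinarith [h1]
  rw [SS, show 2 * m = 2 * m by rfl, sum_range_pair]
  apply Finset.sum_nonneg
  intro k _
  set n1 := 2 * (2 * k) + 1 with hn1
  have hidx : 2 * (2 * k + 1) + 1 = n1 + 2 := by omega
  have hsgn1 : ((-1 : ℝ)) ^ (2 * k) = 1 := by rw [pow_mul]; norm_num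
  have hsgn2 : ((-1 : ℝ)) ^ (2 * k + 1) = -1 := by rw [pow_succ, hsgn1]; norm_num
  have hidx3 : 2 * m + (2 * k + 1) + 1 = (2 * m + 2 * k + 1) + 1 := by omega
  rw [hidx, hsgn1, hsgn2, hidx3]
  set b1 := ‖uu D Y0 (2 * m + 2 * k + 1)‖ with hb1def
  have hb2 : ‖uu D Y0 ((2 * m + 2 * k + 1) + 1)‖ ≤ L * b1 := by
    rw [uu_succ]; exact mvE_norm_le D _
  have hb2sq : ‖uu D Y0 ((2 * m + 2 * k + 1) + 1)‖ ^ 2 ≤ L ^ 2 * b1 ^ 2 := by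
    nlinarith [norm_nonneg (uu D Y0 ((2 * m + 2 * k + 1) + 1)), hb2,
      mul_nonneg hL0 (norm_nonneg (uu D Y0 (2 * m + 2 * k + 1)))]
  have hfac1 : (0 : ℝ) < (n1.factorial : ℝ) := by positivity
  have hfac2 : ((n1 + 2).factorial : ℝ) = ((n1 + 2) : ℝ) * ((n1 + 1) : ℝ) * (n1.factorial : ℝ) := by
    rw [Nat.factorial_succ, Nat.factorial_succ]; push_cast; ring
  have hpow : t ^ (n1 + 2) = t ^ n1 * t ^ 2 := by rw [pow_add]
  have htn : (0 : ℝ) ≤ t ^ n1 := pow_nonneg ht _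
  have hb1n : (0 : ℝ) ≤ b1 ^ 2 := sq_nonneg _
  have key : t ^ (n1 + 2) / ((n1 + 2).factorial : ℝ) * ‖uu D Y0 ((2 * m + 2 * k + 1) + 1)‖ ^ 2
      ≤ t ^ n1 / (n1.factorial : ℝ) * b1 ^ 2 := by
    have step1 : t ^ (n1 + 2) / ((n1 + 2).factorial : ℝ)
        * ‖uu D Y0 ((2 * m + 2 * k + 1) + 1)‖ ^ 2
        ≤ t ^ (n1 + 2) / ((n1 + 2).factorial : ℝ) * (L ^ 2 * b1 ^ 2) := by
      apply mul_le_mul_of_nonneg_left hb2sq (by positivity)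
    refine le_trans step1 ?_
    have hge6 : (6 : ℝ) ≤ ((n1 + 2) : ℝ) * ((n1 + 1) : ℝ) := by
      have : (1 : ℕ) ≤ n1 := by omega
      have hn1r : (1 : ℝ) ≤ (n1 : ℝ) := by exact_mod_cast this
      nlinarith
    have hscal : t ^ (n1 + 2) / ((n1 + 2).factorial : ℝ) * L ^ 2 ≤ t ^ n1 / (n1.factorial : ℝ) := by
      rw [div_mul_eq_mul_div, div_le_div_iff₀ (by positivity) hfac1, hfac2, hpow]
      nlinarith [mul_nonneg htn (mul_nonneg (le_of_lt hfac1) (sub_nonneg.mpr htL2)),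
        mul_nonneg (mul_nonneg htn (le_of_lt hfac1)) (sub_nonneg.mpr hge6)]
    calc t ^ (n1 + 2) / ((n1 + 2).factorial : ℝ) * (L ^ 2 * b1 ^ 2)
        = (t ^ (n1 + 2) / ((n1 + 2).factorial : ℝ) * L ^ 2) * b1 ^ 2 := by ring
      _ ≤ t ^ n1 / (n1.factorial : ℝ) * b1 ^ 2 := mul_le_mul_of_nonneg_right hscal hb1n
  nlinarith [key]
end


theorem strong_stability_r_zero_mod_four {M : ℕ} (D : Matrix (Fin M) (Fin M) ℝ)
    (hD : D + D.transpose = 0) (Y0 : EuclideanSpace ℝ (Fin M)) (r : ℕ)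
    (hr : 0 < r) (hmod : r % 4 = 0) (τ : ℝ) (hτ : 0 ≤ τ)
    (hCFL : τ * ‖Matrix.toEuclideanCLM (𝕜 := ℝ) D‖ ≤ Real.sqrt 6) :
    ∀ t ∈ Set.Icc (0 : ℝ) τ, ‖truncExp D Y0 r t‖ ≤ ‖Y0‖ := by
  obtain ⟨m, rfl⟩ : ∃ m, r = 4 * m := ⟨r / 4, by omega⟩
  intro t ht
  set L := ‖Matrix.toEuclideanCLM (𝕜 := ℝ) D‖ with hLdef
  have hL0 : 0 ≤ L := norm_nonneg _
  set f : ℝ → ℝ := fun s =>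
    inner (𝕜 := ℝ) (truncExp D Y0 (4 * m) s) (truncExp D Y0 (4 * m) s) with hfdef
  have hder : ∀ s, HasDerivAt f
      (-2 * (s ^ (4 * m) / (((4 * m).factorial : ℝ))) * SS D Y0 m s) s :=
    fun s => hasDerivAt_inner_truncExp D Y0 hD m s
  have hanti : AntitoneOn f (Set.Icc 0 τ) := by
    apply antitoneOn_of_deriv_nonpos (convex_Icc 0 τ)
    · exact fun s _ => ((hder s).differentiableAt).continuousAt.continuousWithinAt
    · exact fun s _ => ((hder s).differentiableAt).differentiableWithinAt
    · intro s hs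
      rw [interior_Icc] at hs
      rw [(hder s).deriv]
      have hs0 : 0 ≤ s := le_of_lt hs.1
      have hsL : s * L ≤ Real.sqrt 6 :=
        le_trans (mul_le_mul_of_nonneg_right (le_of_lt hs.2) hL0) hCFL
      have hS := SS_nonneg D Y0 m s hs0 hsL
      have hc : 0 ≤ s ^ (4 * m) / (((4 * m).factorial : ℝ)) := by positivity
      nlinarith
  have h0 : (0 : ℝ) ∈ Set.Icc (0 : ℝ) τ := ⟨le_refl 0, hτ⟩
  have hft : f t ≤ f 0 := hanti h0 ht ht.1
  have hf0 : f 0 = ‖Y0‖ ^ 2 := by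
    show inner (𝕜 := ℝ) (truncExp D Y0 (4 * m) 0) (truncExp D Y0 (4 * m) 0) = ‖Y0‖ ^ 2
    rw [truncExp_zero, real_inner_self_eq_norm_sq]
  have hftv : f t = ‖truncExp D Y0 (4 * m) t‖ ^ 2 := real_inner_self_eq_norm_sq _
  rw [hftv, hf0] at hft
  have hs := Real.sqrt_le_sqrt hft
  rwa [Real.sqrt_sq (norm_nonneg _), Real.sqrt_sq (norm_nonneg _)] at hs
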